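/- Let O be a one-dimensional Noetherian local integral domain with finite normalization R in its fraction field, and let a ∈ O be a nonzero element with aR ⊆ O. Then length_O(O/aO) + length_O(R/O) = length_O(R/aR) + length_O(aR/aO), and length_O(aR/aO) = length_O(R/O); consequently length_O(O/aO) = length_O(R/aR). -/

import Mathlib

/-!
STATEMENT 8. `O` is a one-dimensional Noetherian local integral domain, `F` its
fraction field and `R` its normalization, i.e. the integral closure of `O` in `F`
(characterized by the hypotheses `hinj` and `hint`), assumed finite over `O`;
`a ∈ O` is a nonzero element with `aR ⊆ O`.  All lengths are lengths of
`O`-modules, encoded as the Krull dimension of the submodule lattice.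
Conclusion: `length(O/aO) + length(R/O) = length(R/aR) + length(aR/aO)`, and
`length(aR/aO) = length(R/O)`; consequently `length(O/aO) = length(R/aR)`.
-/

/-- The length of a module, encoded as the Krull dimension (longest chain length)
of its submodule lattice. -/
noncomputable def moduleLength (R M : Type*) [CommRing R] [AddCommGroup M]
    [Module R M] : WithBot ℕ∞ :=
  Order.krullDim (Submodule R M)

/-!
Both chains `aO ≤ aR ≤ R` and `aO ≤ O ≤ R` compute the length of `R/aO`. Multiplication by
the nonzerodivisor `a` identifies `R/O` with `aR/aO`, and the embedding `O → R` identifies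
`O/aO` with its image in `R/aO`. Since `R/O` is finitely generated and killed by `a`, it is a
module over the Artinian ring `O/aO`, so it has finite length and can be cancelled.
-/

open scoped nonZeroDivisors

section

variable {O R : Type*} [CommRing O] [CommRing R] [Algebra O R]

theorem Ideal.restrictScalars_span_singleton (x : R) :
    (Ideal.span {x}).restrictScalars O = LinearMap.range (LinearMap.mulLeft O x) := by
  ext y
  simp [Ideal.mem_span_singleton', mul_comm]

theorem Ideal.map_linearMap_span_singleton (a : O) :
    ((Ideal.span {a}).restrictScalars O).map (Algebra.linearMap O R) =
      (LinearMap.range (Algebra.linearMap O R)).map (LinearMap.mulLeft O (algebraMap O R a)) := by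
  rw [Ideal.restrictScalars_span_singleton, ← LinearMap.range_comp, ← LinearMap.range_comp]
  congr 1
  ext
  simp

end

section

variable {R M M' : Type*} [Ring R] [AddCommGroup M] [Module R M] [AddCommGroup M'] [Module R M']

theorem Module.length_quotient_eq_add_of_le {N P : Submodule R M} (h : N ≤ P) :
    Module.length R (M ⧸ N) =
      Module.length R (P ⧸ N.comap P.subtype) + Module.length R (M ⧸ P) := by
  refine Module.length_eq_add_of_exact ((N.comap P.subtype).mapQ N P.subtype le_rfl)
    (N.factor h) ?_ (Submodule.factor_surjective h) ?_
  · rw [← LinearMap.ker_eq_bot, Submodule.ker_mapQ, Submodule.mkQ_map_self]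
  · rw [LinearMap.exact_iff, Submodule.range_mapQ, Submodule.range_subtype]
    ext x
    obtain ⟨x, rfl⟩ := N.mkQ_surjective x
    simp only [Submodule.mkQ_apply, LinearMap.mem_ker, Submodule.factor, Submodule.mapQ_apply,
      LinearMap.id_apply, Submodule.Quotient.mk_eq_zero, Submodule.mem_map, Submodule.Quotient.eq]
    exact ⟨fun hx => ⟨x, hx, by simp⟩, fun ⟨y, hy, hxy⟩ => by simpa using P.sub_mem hy (h hxy)⟩

theorem Module.length_quotient_eq_of_injective {f : M →ₗ[R] M'} (hf : Function.Injective f)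
    (P : Submodule R M) :
    Module.length R (M ⧸ P) =
      Module.length R (LinearMap.range f ⧸ (P.map f).comap (LinearMap.range f).subtype) := by
  refine (Submodule.Quotient.equiv P _ (LinearEquiv.ofInjective f hf) ?_).length_eq
  ext ⟨y, x, rfl⟩
  change LinearEquiv.ofInjective f hf x ∈ _ ↔ f x ∈ P.map f
  rw [Submodule.mem_map_equiv, LinearEquiv.symm_apply_apply, ← SetLike.mem_coe (x := f x),
    Submodule.map_coe, hf.mem_set_image, SetLike.mem_coe]

end

theorem Module.length_ne_top_of_smul_eq_zero {A M : Type*} [CommRing A] [IsNoetherianRing A]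
    (hdim : ringKrullDim A ≤ 1) {a : A} (ha : a ∈ A⁰) [AddCommGroup M] [Module A M]
    [Module.Finite A M] (hM : ∀ x : M, a • x = 0) : Module.length A M ≠ ⊤ := by
  have : Ring.KrullDimLE 0 (A ⧸ Ideal.span {a}) := Ring.krullDimLE_iff.mpr <|
    ENat.WithBot.add_le_add_natCast_right_iff.mp
      ((ringKrullDim_quotient_succ_le_of_nonZeroDivisor ha).trans hdim)
  have : IsArtinianRing (A ⧸ Ideal.span {a}) :=
    IsNoetherianRing.isArtinianRing_of_krullDimLE_zero
  have htors : Module.IsTorsionBySet A M (Ideal.span {a} : Set A) :=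
    (Module.isTorsionBySet_span_singleton_iff a).mpr fun x => hM x
  let _ : Module (A ⧸ Ideal.span {a}) M := htors.module
  have := htors.isScalarTower (S := A)
  have : Module.Finite (A ⧸ Ideal.span {a}) M := Module.Finite.of_restrictScalars_finite A _ _
  rw [Module.length_eq_of_surjective (Ideal.Quotient.mk_surjective (I := Ideal.span {a}))]
  exact Module.length_ne_top

theorem length_comparison_with_normalization_general
    (O : Type) [CommRing O] [IsDomain O] [IsNoetherianRing O]
    (hdim : ringKrullDim O = 1)
    (F : Type) [Field F] [Algebra O F] [IsFractionRing O F]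
    (R : Type) [CommRing R] [Algebra O R] [Algebra R F] [IsScalarTower O R F]
    -- `R` is the integral closure (normalization) of `O` in `F`
    (hinj : Function.Injective (algebraMap R F))
    [Module.Finite O R]
    (a : O) (ha : a ≠ 0)
    -- `aR ⊆ O`: multiplication by `a` maps `R` into `O`
    (haR : ∀ r : R, algebraMap O R a * r ∈ LinearMap.range (Algebra.linearMap O R)) :
    -- `aR` and `aO` as `O`-submodules of `R`
    ∀ (aR aO : Submodule O R),
      aR = Submodule.restrictScalars O (Ideal.span {algebraMap O R a}) →
      aO = Submodule.map (Algebra.linearMap O R)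
        (Submodule.restrictScalars O (Ideal.span {a})) →
      (moduleLength O (O ⧸ Ideal.span {a}) +
          moduleLength O (R ⧸ LinearMap.range (Algebra.linearMap O R)) =
        moduleLength O (R ⧸ aR) +
          moduleLength O (↥aR ⧸ aO.comap aR.subtype)) ∧
      moduleLength O (↥aR ⧸ aO.comap aR.subtype) =
        moduleLength O (R ⧸ LinearMap.range (Algebra.linearMap O R)) ∧
      moduleLength O (O ⧸ Ideal.span {a}) = moduleLength O (R ⧸ aR) := by
  rintro aR aO haRdef haOdef
  set O' := LinearMap.range (Algebra.linearMap O R)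
  have hO : Function.Injective (algebraMap O R) := .of_comp (f := algebraMap R F) <| by
    rw [← RingHom.coe_comp, ← IsScalarTower.algebraMap_eq]; exact IsFractionRing.injective O F
  have : IsDomain R := hinj.isDomain
  have hα : Function.Injective (LinearMap.mulLeft O (algebraMap O R a)) :=
    mul_right_injective₀ ((map_ne_zero_iff _ hO).mpr ha)
  rw [Ideal.restrictScalars_span_singleton] at haRdef
  have haO' := haOdef.trans (Ideal.map_linearMap_span_singleton a)
  have hOa : Module.length O (O ⧸ Ideal.span {a}) =
      Module.length O (O' ⧸ aO.comap O'.subtype) :=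
    haOdef ▸ Module.length_quotient_eq_of_injective hO _
  have hRO : Module.length O (R ⧸ O') = Module.length O (aR ⧸ aO.comap aR.subtype) :=
    haRdef ▸ haO' ▸ Module.length_quotient_eq_of_injective hα O'
  have hchain_aR := Module.length_quotient_eq_add_of_le (haO' ▸ haRdef ▸ LinearMap.map_le_range)
  have hchain_O := Module.length_quotient_eq_add_of_le (haOdef ▸ LinearMap.map_le_range : aO ≤ O')
  have hfin : Module.length O (R ⧸ O') ≠ ⊤ := by
    refine Module.length_ne_top_of_smul_eq_zero hdim.le (mem_nonZeroDivisors_of_ne_zero ha) ?_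
    rintro ⟨r⟩
    rw [Submodule.Quotient.quot_mk_eq_mk, ← Submodule.Quotient.mk_smul,
      Submodule.Quotient.mk_eq_zero, Algebra.smul_def]
    exact haR r
  simp only [moduleLength, ← Module.coe_length, ← WithBot.coe_add, WithBot.coe_inj]
  have hsum : Module.length O (O ⧸ Ideal.span {a}) + Module.length O (R ⧸ O') =
      Module.length O (R ⧸ aR) + Module.length O (R ⧸ O') := by
    rw [hOa, ← hchain_O, hchain_aR, hRO, add_comm]
  exact ⟨hsum.trans (by rw [hRO]), hRO.symm, WithTop.add_right_cancel hfin hsum⟩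

theorem length_comparison_with_normalization
    (O : Type) [CommRing O] [IsDomain O] [IsNoetherianRing O] [IsLocalRing O]
    (hdim : ringKrullDim O = 1)
    (F : Type) [Field F] [Algebra O F] [IsFractionRing O F]
    (R : Type) [CommRing R] [Algebra O R] [Algebra R F] [IsScalarTower O R F]
    -- `R` is the integral closure (normalization) of `O` in `F`
    (hinj : Function.Injective (algebraMap R F))
    (hint : ∀ x : F, IsIntegral O x ↔ ∃ r : R, algebraMap R F r = x)
    [Module.Finite O R]
    (a : O) (ha : a ≠ 0)
    -- `aR ⊆ O`: multiplication by `a` maps `R` into `O`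
    (haR : ∀ r : R, algebraMap O R a * r ∈ LinearMap.range (Algebra.linearMap O R)) :
    -- `aR` and `aO` as `O`-submodules of `R`
    ∀ (aR aO : Submodule O R),
      aR = Submodule.restrictScalars O (Ideal.span {algebraMap O R a}) →
      aO = Submodule.map (Algebra.linearMap O R)
        (Submodule.restrictScalars O (Ideal.span {a})) →
      (moduleLength O (O ⧸ Ideal.span {a}) +
          moduleLength O (R ⧸ LinearMap.range (Algebra.linearMap O R)) =
        moduleLength O (R ⧸ aR) +
          moduleLength O (↥aR ⧸ aO.comap aR.subtype)) ∧
      moduleLength O (↥aR ⧸ aO.comap aR.subtype) =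
        moduleLength O (R ⧸ LinearMap.range (Algebra.linearMap O R)) ∧
      moduleLength O (O ⧸ Ideal.span {a}) = moduleLength O (R ⧸ aR) :=
  length_comparison_with_normalization_general O hdim F R hinj a ha haR
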